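/- Let Σ ∈ ℝ^{ℓ×ℓ} be symmetric positive definite and Σh ∈ ℝ^{h×h} be symmetric, with h ≤ ℓ. Let A ∈ ℝ^{ℓ×h} be such that AᵀΣA is positive definite, and set Ã = (AᵀΣA)⁻¹. Then the function g₁(A) = Tr((AᵀΣA)⁻¹ Σh) has Fréchet derivative at A given by H ↦ Tr(Gᵀ H) with gradient G = −2 Σ A Ã Σh Ã. -/

import Mathlib

open Matrix

attribute [local instance] Matrix.normedAddCommGroup Matrix.normedSpace

/-- The continuous linear map `H ↦ Tr(Gᵀ H)` on `ℓ×h` real matrices. -/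
noncomputable def traceCLM {ℓ h : ℕ} (G : Matrix (Fin ℓ) (Fin h) ℝ) :
    Matrix (Fin ℓ) (Fin h) ℝ →L[ℝ] ℝ :=
  LinearMap.toContinuousLinearMap
    { toFun := fun H => (Gᵀ * H).trace
      map_add' := fun X Y => by simp [Matrix.mul_add]
      map_smul' := fun c X => by simp [Matrix.mul_smul] }

/-!
`g₁` is the composite of the quadratic map `M ↦ MᵀΣM`, matrix inversion and the linear map
`W ↦ Tr(W Σh)`. The chain rule, with `d(X⁻¹) = -X⁻¹ dX X⁻¹`, gives the derivative
`H ↦ -Tr(Ã (HᵀΣA + AᵀΣH) Ã Σh)`. As `Ã`, `Σ` and `Σh` are symmetric, transposing and cycling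
shows that both terms equal `Tr(Ã Σh Ã AᵀΣ H)`, so the derivative is `Tr(Gᵀ H)` with
`G = -2 Σ A Ã Σh Ã`.
-/

theorem map_ringInverse {M N F : Type*} [MonoidWithZero M] [MonoidWithZero N] [EquivLike F M N]
    [MulEquivClass F M N] (f : F) (x : M) : f (Ring.inverse x) = Ring.inverse (f x) := by
  by_cases hx : IsUnit x
  · obtain ⟨u, rfl⟩ := hx
    rw [Ring.inverse_unit]
    exact (Ring.inverse_unit (Units.map (f : M →* N) u)).symm
  · rw [Ring.inverse_non_unit x hx, Ring.inverse_non_unit _ (mt (isUnit_map_iff f x).mp hx),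
      map_zero]

namespace Matrix

variable {𝕜 : Type*} [RCLike 𝕜]

/- The entrywise sup norm is not a ring norm, so the derivative of `Ring.inverse` is taken in the
Banach algebra of operators on `EuclideanSpace 𝕜 n` and transported back along `toEuclideanCLM`. -/
theorem hasFDerivAt_inv {n : Type*} [Fintype n] [DecidableEq n] {X : Matrix n n 𝕜}
    (hX : IsUnit X) :
    HasFDerivAt (fun Y : Matrix n n 𝕜 => Y⁻¹)
      (-(LinearMap.mulLeftRight 𝕜 (X⁻¹, X⁻¹)).toContinuousLinearMap) X := by
  let e := (toEuclideanCLM (n := n) (𝕜 := 𝕜)).toAlgEquiv.toLinearEquiv.toContinuousLinearEquiv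
  have he_mul (A B : Matrix n n 𝕜) : e (A * B) = e A * e B :=
    map_mul (toEuclideanCLM (n := n) (𝕜 := 𝕜)) A B
  have he_inv (Y : Matrix n n 𝕜) : e Y⁻¹ = Ring.inverse (e Y) := by
    rw [nonsing_inv_eq_ringInverse]
    exact map_ringInverse (toEuclideanCLM (n := n) (𝕜 := 𝕜)) Y
  have hinv : (fun Y : Matrix n n 𝕜 => Y⁻¹) = e.symm ∘ Ring.inverse ∘ e :=
    funext fun Y => e.eq_symm_apply.2 (he_inv Y)
  obtain ⟨u, hu⟩ := hX.map (toEuclideanCLM (n := n) (𝕜 := 𝕜))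
  have hu_inv : (↑u⁻¹ : EuclideanSpace 𝕜 n →L[𝕜] EuclideanSpace 𝕜 n) = e X⁻¹ := by
    rw [← Ring.inverse_unit, hu, he_inv]
    rfl
  rw [hinv]
  refine (e.symm.hasFDerivAt.comp X ((hu ▸ hasFDerivAt_ringInverse (𝕜 := 𝕜) u).comp X
    e.hasFDerivAt)).congr_fderiv (ContinuousLinearMap.ext fun H => ?_)
  change -e.symm (↑u⁻¹ * e H * ↑u⁻¹) = -(X⁻¹ * H * X⁻¹)
  rw [hu_inv, ← he_mul, ← he_mul, e.symm_apply_apply]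

variable {E : Type*} [NormedAddCommGroup E] [NormedSpace 𝕜 E]
  {l m p : Type*} [Fintype l] [Fintype m] [Fintype p]

theorem hasFDerivAt_transpose (A : Matrix m p 𝕜) :
    HasFDerivAt (fun M : Matrix m p 𝕜 => Mᵀ)
      (transposeLinearEquiv m p 𝕜 𝕜).toContinuousLinearEquiv.toContinuousLinearMap A :=
  (transposeLinearEquiv m p 𝕜 𝕜).toContinuousLinearEquiv.hasFDerivAt

theorem _root_.HasFDerivAt.matrix_mul {f : E → Matrix l m 𝕜} {g : E → Matrix m p 𝕜}
    {f' : E →L[𝕜] Matrix l m 𝕜} {g' : E →L[𝕜] Matrix m p 𝕜} {x : E}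
    (hf : HasFDerivAt f f' x) (hg : HasFDerivAt g g' x) :
    HasFDerivAt (fun y => f y * g y)
      ((mulRightLinearMap l 𝕜 (g x)).toContinuousLinearMap.comp f' +
        (mulLeftLinearMap p 𝕜 (f x)).toContinuousLinearMap.comp g') x :=
  ((mulLinearMap (l := l) (m := m) (n := p) (A := 𝕜) 𝕜).toContinuousBilinearMap
    |>.hasFDerivAt_of_bilinear hf hg).congr_fderiv (add_comm _ _)

theorem _root_.HasFDerivAt.matrix_mul_const {f : E → Matrix l m 𝕜} {f' : E →L[𝕜] Matrix l m 𝕜}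
    {x : E} (hf : HasFDerivAt f f' x) (B : Matrix m p 𝕜) :
    HasFDerivAt (fun y => f y * B) ((mulRightLinearMap l 𝕜 B).toContinuousLinearMap.comp f') x :=
  (mulRightLinearMap l 𝕜 B).toContinuousLinearMap.hasFDerivAt.comp x hf

end Matrix

theorem Matrix.trace_mul_transpose_add_mul {n R : Type*} [Fintype n] [CommRing R]
    {Y S : Matrix n n R} (hY : Y.IsSymm) (hS : S.IsSymm) (K : Matrix n n R) :
    (Y * (Kᵀ + K) * Y * S).trace = 2 * (Y * S * Y * K).trace := by
  have hcycle : (Y * K * Y * S).trace = (Y * S * Y * K).trace := by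
    rw [Matrix.mul_assoc (Y * K), trace_mul_comm, ← Matrix.mul_assoc]
  have htranspose : (Y * Kᵀ * Y * S).trace = (Y * K * Y * S).trace := by
    rw [← trace_transpose]
    simp only [transpose_mul, transpose_transpose, hY.eq, hS.eq]
    rw [trace_mul_comm, ← Matrix.mul_assoc]
  rw [Matrix.mul_add, Matrix.add_mul, Matrix.add_mul, trace_add, htranspose, hcycle]
  ring

theorem stmt_4_general {ℓ h : ℕ}
    (S : Matrix (Fin ℓ) (Fin ℓ) ℝ) (hS : S.PosDef)
    (Sh : Matrix (Fin h) (Fin h) ℝ) (hSh : Sh.IsSymm)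
    (A : Matrix (Fin ℓ) (Fin h) ℝ) (hA : (Aᵀ * S * A).PosDef) :
    HasFDerivAt
      (fun M : Matrix (Fin ℓ) (Fin h) ℝ => ((Mᵀ * S * M)⁻¹ * Sh).trace)
      (traceCLM ((-2 : ℝ) •
        (S * A * (Aᵀ * S * A)⁻¹ * Sh * (Aᵀ * S * A)⁻¹)))
      A := by
  have hq : HasFDerivAt (fun M : Matrix (Fin ℓ) (Fin h) ℝ => Mᵀ * S * M) _ A :=
    ((hasFDerivAt_transpose A).matrix_mul_const S).matrix_mul (hasFDerivAt_id A)
  have hinv : HasFDerivAt (fun M : Matrix (Fin ℓ) (Fin h) ℝ => (Mᵀ * S * M)⁻¹) _ A :=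
    (hasFDerivAt_inv hA.isUnit).comp (f := fun M => Mᵀ * S * M) A hq
  refine ((traceLinearMap (Fin h) ℝ ℝ).toContinuousLinearMap.hasFDerivAt.comp A
    (hinv.matrix_mul_const Sh)).congr_fderiv (ContinuousLinearMap.ext fun H => ?_)
  have hSt : Sᵀ = S := hS.isHermitian
  set X := Aᵀ * S * A
  have hXinv : X⁻¹.IsSymm := hA.inv.isHermitian
  change (-(X⁻¹ * (Hᵀ * S * A + Aᵀ * S * H) * X⁻¹) * Sh).trace
    = (((-2 : ℝ) • (S * A * X⁻¹ * Sh * X⁻¹))ᵀ * H).trace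
  have hK : Hᵀ * S * A = (Aᵀ * S * H)ᵀ := by
    simp only [transpose_mul, transpose_transpose, hSt, Matrix.mul_assoc]
  rw [hK, neg_mul, trace_neg, trace_mul_transpose_add_mul hXinv hSh, transpose_smul, smul_mul,
    trace_smul]
  simp only [transpose_mul, hSt, hXinv.eq, hSh.eq, Matrix.mul_assoc, smul_eq_mul]
  ring

/-- The Euclidean gradient of `g₁(A) = Tr((AᵀΣA)⁻¹ Σh)` at a point `A` where `AᵀΣA` is
positive definite is `G = −2 Σ A Ã Σh Ã`, with `Ã = (AᵀΣA)⁻¹`; i.e. `g₁` has Fréchet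
derivative `H ↦ Tr(Gᵀ H)` at `A`. -/
theorem stmt_4 {ℓ h : ℕ} (hle : h ≤ ℓ)
    (S : Matrix (Fin ℓ) (Fin ℓ) ℝ) (hS : S.PosDef)
    (Sh : Matrix (Fin h) (Fin h) ℝ) (hSh : Sh.IsSymm)
    (A : Matrix (Fin ℓ) (Fin h) ℝ) (hA : (Aᵀ * S * A).PosDef) :
    HasFDerivAt
      (fun M : Matrix (Fin ℓ) (Fin h) ℝ => ((Mᵀ * S * M)⁻¹ * Sh).trace)
      (traceCLM ((-2 : ℝ) •
        (S * A * (Aᵀ * S * A)⁻¹ * Sh * (Aᵀ * S * A)⁻¹)))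
      A :=
  stmt_4_general S hS Sh hSh A hA
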